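/- Let (M;ρ,d_M) be a representation of a modified λ-differential 3-Lie algebra (A,[-,-,-],d) and let R : M → A be a linear map. Define R̄ : A⊕M → A⊕M by R̄(a+u) = R(u) + 0. Then R is an O-operator (i.e. R∘d_M = d∘R and [Rv1,Rv2,Rv3] = R(ρ(Rv1,Rv2)v3 + ρ(Rv2,Rv3)v1 + ρ(Rv3,Rv1)v2) for all v1,v2,v3 ∈ M) if and only if R̄ is a Nijenhuis operator on the semidirect product modified λ-differential 3-Lie algebra (A⊕M, [-,-,-]_ρ, d⊕d_M). -/
import Mathlib


open Finset

section Prelude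

variable (k : Type*) {A W M : Type*} [Field k] [CharZero k]
  [AddCommGroup A] [Module k A] [AddCommGroup W] [Module k W]
  [AddCommGroup M] [Module k M]

/-- A trilinear, totally skew-symmetric map `A × A × A → W`. -/
def IsTriSkew (f : A → A → A → W) : Prop :=
  (∀ (t : k) (a a' b c : A), f (t • a + a') b c = t • f a b c + f a' b c) ∧
  (∀ (t : k) (a b b' c : A), f a (t • b + b') c = t • f a b c + f a b' c) ∧
  (∀ (t : k) (a b c c' : A), f a b (t • c + c') = t • f a b c + f a b c') ∧
  (∀ a b c : A, f a b c = - f b a c) ∧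
  (∀ a b c : A, f a b c = - f a c b)

/-- `br` makes `A` a 3-Lie algebra: it is trilinear, totally skew-symmetric and
satisfies the Filippov identity. -/
def Is3LieBr (br : A → A → A → A) : Prop :=
  IsTriSkew k br ∧
  ∀ a1 a2 a3 a4 a5 : A, br a1 a2 (br a3 a4 a5) =
    br (br a1 a2 a3) a4 a5 + br a3 (br a1 a2 a4) a5 + br a3 a4 (br a1 a2 a5)

/-- `d` is a modified `lam`-differential operator on `(A, br)`. -/
def IsMDiffOn (br : A → A → A → A) (lam : k) (d : A → A) : Prop :=
  ∀ a b c : A, d (br a b c) =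
    br (d a) b c + br a (d b) c + br a b (d c) + lam • br a b c

/-- `ρ` is a representation of the 3-Lie algebra `(A, br)` on `M`. -/
def Is3LieRep (br : A → A → A → A) (ρ : A → A → M →ₗ[k] M) : Prop :=
  (∀ (t : k) (a a' b : A), ρ (t • a + a') b = t • ρ a b + ρ a' b) ∧
  (∀ (t : k) (a b b' : A), ρ a (t • b + b') = t • ρ a b + ρ a b') ∧
  (∀ a b : A, ρ a b = - ρ b a) ∧
  (∀ a1 a2 a3 a4 : A, ρ (br a1 a2 a3) a4 =
    ρ a2 a3 ∘ₗ ρ a1 a4 + ρ a3 a1 ∘ₗ ρ a2 a4 + ρ a1 a2 ∘ₗ ρ a3 a4) ∧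
  (∀ a1 a2 a3 a4 : A, ρ a1 a2 ∘ₗ ρ a3 a4 =
    ρ a3 a4 ∘ₗ ρ a1 a2 + ρ (br a1 a2 a3) a4 + ρ a3 (br a1 a2 a4))

/-- Compatibility of `dM` making `(M, ρ, dM)` a representation of the modified
`lam`-differential 3-Lie algebra `(A, br, d)`. -/
def IsMDiffRep (ρ : A → A → M →ₗ[k] M) (lam : k) (d : A → A) (dM : M → M) : Prop :=
  ∀ (a b : A) (v : M), dM (ρ a b v) =
    ρ (d a) b v + ρ a (d b) v + ρ a b (dM v) + lam • ρ a b v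

end Prelude

/-- A Nijenhuis operator on a modified `λ`-differential 3-Lie algebra `(L, br, D)`. -/
def IsNijenhuisOn {k L : Type*} [Field k] [AddCommGroup L] [Module k L]
    (br : L → L → L → L) (D : L → L) (N : L → L) : Prop :=
  (∀ x : L, N (D x) = D (N x)) ∧
  ∀ x y z : L,
    br (N x) (N y) (N z) =
      N (br x (N y) (N z) + br (N x) y (N z) + br (N x) (N y) z) -
        N (N (br (N x) y z + br x (N y) z + br x y (N z))) +
          N (N (N (br x y z)))

/-- `R : M → A` is an `𝒪`-operator on the modified `λ`-differential 3-Lie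
algebra `(A, br, d)` with respect to the representation `(M, ρ, dM)` iff
`R̄(a+u) = R(u)` is a Nijenhuis operator on the semidirect product
`(A ⊕ M, [-,-,-]_ρ, d ⊕ dM)`. -/
theorem stmt13 {k A M : Type*} [Field k] [CharZero k] [AddCommGroup A] [Module k A]
    [AddCommGroup M] [Module k M]
    (br : A → A → A → A) (lam : k) (d : A →ₗ[k] A)
    (h3 : Is3LieBr k br) (hd : IsMDiffOn k br lam ⇑d)
    (ρ : A → A → M →ₗ[k] M) (hρ : Is3LieRep k br ρ) (dM : M →ₗ[k] M)
    (hdM : IsMDiffRep k ρ lam ⇑d ⇑dM)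
    (R : M →ₗ[k] A) :
    ((∀ v : M, R (dM v) = d (R v)) ∧
      ∀ v1 v2 v3 : M,
        br (R v1) (R v2) (R v3) =
          R (ρ (R v1) (R v2) v3 + ρ (R v2) (R v3) v1 + ρ (R v3) (R v1) v2)) ↔
    IsNijenhuisOn (k := k)
      (fun x y z : A × M =>
        ((br x.1 y.1 z.1 : A),
          (ρ x.1 y.1 z.2 + ρ z.1 x.1 y.2 + ρ y.1 z.1 x.2 : M)))
      (fun x : A × M => ((d x.1 : A), (dM x.2 : M)))
      (fun x : A × M => ((R x.2 : A), (0 : M))) := by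
  constructor
  · rintro ⟨h1, h2⟩
    refine ⟨fun x => by simp [h1], fun x y z => ?_⟩
    simp only [map_zero, map_add, Prod.mk.injEq, Prod.mk_add_mk, Prod.mk_sub_mk,
      add_zero, zero_add, sub_zero]
    constructor
    · rw [h2 x.2 y.2 z.2, map_add, map_add]
      abel
    · simp
  · rintro ⟨n1, n2⟩
    constructor
    · intro v
      have := congrArg Prod.fst (n1 ((0 : A), v))
      simpa using this
    · intro v1 v2 v3
      have := congrArg Prod.fst (n2 ((0 : A), v1) ((0 : A), v2) ((0 : A), v3))
      simp only [map_zero, map_add, Prod.snd_add, Prod.fst_add, Prod.fst_sub, add_zero,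
        zero_add, sub_zero] at this
      rw [map_add, map_add, this]
      abel
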